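/- Let X = {0,1}^n be the binary Hamming space with Hamming distance d, and for x,y ∈ X define λ(x,y) = (1/2)·Σ_{u∈X} |d(x,u) − d(y,u)|. If d(x,y) = w with 1 ≤ w ≤ n, then λ(x,y) = 2^{n−w}·w·C(w−1, ⌈w/2⌉−1). Consequently, writing λ(w) for this value, λ(2i−1) = λ(2i) = 2^{n−2i}·i·C(2i,i) for 1 ≤ i ≤ ⌊n/2⌋, and the map w ↦ λ(w) is monotone nondecreasing on {1,…,n}. -/
import Mathlib

open Finset

/-- `λ(w) = 2^{n−w}·w·C(w−1, ⌈w/2⌉−1)` (note `⌈w/2⌉ − 1 = (w+1)/2 − 1` with natural division). -/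
noncomputable def lam (n w : ℕ) : ℝ :=
  (2 : ℝ) ^ (n - w) * w * Nat.choose (w - 1) ((w + 1) / 2 - 1)

private lemma tele (w j : ℕ) (hj : j ≤ w) :
    ((w : ℤ) - 2 * j) * (w.choose j : ℤ)
      = ((j+1 : ℤ)) * (w.choose (j+1)) - (j : ℤ) * (w.choose j) := by
  have h := Nat.choose_succ_right_eq w j
  zify [hj] at h
  linarith

private lemma sumid (w : ℕ) :
    ∑ j ∈ range (w+1), (w.choose j : ℤ) * |2 * (j:ℤ) - w|
      = 2 * ((w+1)/2 : ℕ) * (w.choose ((w+1)/2) : ℕ) := by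
  set m := (w+1)/2 with hm
  have hmw : m ≤ w + 1 := by omega
  have h2m : w ≤ 2 * m := by omega
  have h2m' : 2 * m ≤ w + 1 := by omega
  set t : ℕ → ℤ := fun j => (j : ℤ) * (w.choose j) with ht
  have hsplit : ∑ j ∈ range (w+1), (w.choose j : ℤ) * |2 * (j:ℤ) - w|
      = (∑ j ∈ range m, (w.choose j : ℤ) * |2 * (j:ℤ) - w|)
        + ∑ j ∈ Ico m (w+1), (w.choose j : ℤ) * |2 * (j:ℤ) - w| := by
    rw [range_eq_Ico, ← Finset.sum_Ico_consecutive _ (Nat.zero_le m) hmw, ← range_eq_Ico]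
  rw [hsplit]
  have h1 : ∑ j ∈ range m, (w.choose j : ℤ) * |2 * (j:ℤ) - w| = t m := by
    have : ∀ j ∈ range m, (w.choose j : ℤ) * |2 * (j:ℤ) - w| = t (j+1) - t j := by
      intro j hj
      rw [mem_range] at hj
      have hjw : j ≤ w := by omega
      have habs : |2 * (j:ℤ) - w| = (w : ℤ) - 2 * j := by
        rw [abs_sub_comm, abs_of_nonneg]
        have : 2 * j + 1 ≤ w := by omega
        push_cast at this ⊢
        linarith
      rw [habs]
      simp only [ht]
      push_cast
      linear_combination tele w j hjw
    rw [Finset.sum_congr rfl this, Finset.sum_range_sub]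
    simp [ht]
  have h2 : ∑ j ∈ Ico m (w+1), (w.choose j : ℤ) * |2 * (j:ℤ) - w| = t m := by
    have : ∀ j ∈ Ico m (w+1), (w.choose j : ℤ) * |2 * (j:ℤ) - w| = t j - t (j+1) := by
      intro j hj
      rw [mem_Ico] at hj
      have hjw : j ≤ w := by omega
      have habs : |2 * (j:ℤ) - w| = 2 * (j:ℤ) - w := by
        apply abs_of_nonneg
        have : w ≤ 2 * j := by omega
        push_cast at this ⊢
        linarith
      rw [habs]
      simp only [ht]
      push_cast
      linear_combination -tele w j hjw
    rw [Finset.sum_congr rfl this, Finset.sum_Ico_eq_sum_range]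
    have h3 := Finset.sum_range_sub' (fun k => t (m + k)) (w + 1 - m)
    simp only [add_zero, ← add_assoc] at h3
    rw [h3, show m + (w + 1 - m) = w + 1 by omega]
    simp [ht, Nat.choose_succ_self]
  rw [h1, h2]
  push_cast [ht]
  ring

private def boolToFinset {σ : Type*} [Fintype σ] [DecidableEq σ] (c : σ → Bool) :
    (σ → Bool) ≃ Finset σ where
  toFun a := univ.filter (fun i => a i ≠ c i)
  invFun T := fun i => if i ∈ T then !(c i) else c i
  left_inv a := by
    funext i
    by_cases h : i ∈ univ.filter (fun i => a i ≠ c i) <;>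
      simp only [mem_filter, mem_univ, true_and] at h <;> simp [h] <;>
      revert h <;> cases a i <;> cases c i <;> simp
  right_inv T := by
    ext i
    by_cases h : i ∈ T <;> simp [h] <;> cases c i <;> simp

private lemma countBool {σ : Type*} [Fintype σ] [DecidableEq σ] (c : σ → Bool) (f : ℕ → ℝ) :
    ∑ a : σ → Bool, f (univ.filter (fun i => a i ≠ c i)).card
      = ∑ j ∈ range (Fintype.card σ + 1), ((Fintype.card σ).choose j : ℝ) * f j := by
  have h1 : ∑ a : σ → Bool, f (univ.filter (fun i => a i ≠ c i)).card
      = ∑ T : Finset σ, f T.card :=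
    Fintype.sum_equiv (boolToFinset c) _ _ (fun a => rfl)
  rw [h1, ← Finset.powerset_univ, Finset.sum_powerset, Finset.card_univ]
  refine Finset.sum_congr rfl (fun j hj => ?_)
  have : ∀ T ∈ Finset.powersetCard j (univ : Finset σ), f T.card = f j := by
    intro T hT
    rw [(Finset.mem_powersetCard.mp hT).2]
  rw [Finset.sum_congr rfl this, Finset.sum_const, Finset.card_powersetCard, Finset.card_univ,
    nsmul_eq_mul]

private lemma hd_cast (n : ℕ) (a b : Fin n → Bool) :
    (hammingDist a b : ℤ) = ∑ i : Fin n, if a i ≠ b i then (1:ℤ) else 0 := by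
  have : hammingDist a b = (univ.filter (fun i => a i ≠ b i)).card := by
    simp [hammingDist]
  rw [this, Finset.card_filter]
  push_cast
  exact Finset.sum_congr rfl (fun i _ => by split <;> simp)

private lemma diff_eq (n : ℕ) (x y u : Fin n → Bool) :
    (hammingDist x u : ℤ) - hammingDist y u
      = 2 * ((univ.filter (fun i => x i ≠ y i ∧ x i ≠ u i)).card : ℤ) - hammingDist x y := by
  rw [hd_cast, hd_cast, hd_cast, Finset.card_filter]
  push_cast
  rw [← Finset.sum_sub_distrib, Finset.mul_sum, ← Finset.sum_sub_distrib]
  refine Finset.sum_congr rfl (fun i _ => ?_)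
  cases hx : x i <;> cases hy : y i <;> cases hu : u i <;> norm_num

private lemma factor (n : ℕ) (x y : Fin n → Bool) (f : ℕ → ℝ) (w : ℕ)
    (hxy : hammingDist x y = w) :
    ∑ u : Fin n → Bool, f ((univ.filter (fun i => x i ≠ y i ∧ x i ≠ u i)).card)
      = 2^(n-w) * ∑ j ∈ range (w+1), (w.choose j : ℝ) * f j := by
  classical
  set p : Fin n → Prop := fun i => x i ≠ y i with hp
  have hcardp : Fintype.card {i // p i} = w := by
    rw [Fintype.card_subtype]
    rw [← hxy]; simp [hammingDist, hp]
  have hcardnp : Fintype.card {i // ¬ p i} = n - w := by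
    rw [Fintype.card_subtype_compl, hcardp, Fintype.card_fin]
  set e := (Equiv.piEquivPiSubtypeProd p (fun _ => Bool)).symm with he
  rw [← Equiv.sum_comp e (fun u => f ((univ.filter (fun i => p i ∧ x i ≠ u i)).card))]
  rw [Fintype.sum_prod_type]
  have key : ∀ (a : {i // p i} → Bool) (b : {i // ¬ p i} → Bool),
      (univ.filter (fun i => p i ∧ x i ≠ (e (a, b)) i)).card
        = (univ.filter (fun i : {i // p i} => x i.1 ≠ a i)).card := by
    intro a b
    refine (Finset.card_bij (fun (i : {i // p i}) _ => i.1) ?_ ?_ ?_).symm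
    · intro i hi
      simp only [mem_filter, mem_univ, true_and] at hi ⊢
      refine ⟨i.2, ?_⟩
      have : e (a, b) i.1 = a i := by
        simp only [he, Equiv.piEquivPiSubtypeProd_symm_apply]
        rw [dif_pos i.2]
      rw [this]; exact hi
    · intro i₁ _ i₂ _ h
      exact Subtype.ext h
    · intro i hi
      simp only [mem_filter, mem_univ, true_and] at hi
      refine ⟨⟨i, hi.1⟩, ?_, rfl⟩
      simp only [mem_filter, mem_univ, true_and]
      have : e (a, b) i = a ⟨i, hi.1⟩ := by
        simp only [he, Equiv.piEquivPiSubtypeProd_symm_apply]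
        rw [dif_pos hi.1]
      rw [this] at hi
      exact hi.2
  have hmid : ∀ a : {i // p i} → Bool,
      ∑ b : {i // ¬ p i} → Bool,
        f ((univ.filter (fun i => p i ∧ x i ≠ (e (a, b)) i)).card)
      = (2:ℝ)^(n-w) * f ((univ.filter (fun i : {i // p i} => a i ≠ x i.1)).card) := by
    intro a
    have : ∀ b : {i // ¬ p i} → Bool,
        f ((univ.filter (fun i => p i ∧ x i ≠ (e (a, b)) i)).card)
        = f ((univ.filter (fun i : {i // p i} => a i ≠ x i.1)).card) := by
      intro b
      rw [key a b]
      congr 2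
      exact Finset.filter_congr (fun i _ => by simp [ne_comm])
    rw [Finset.sum_congr rfl (fun b _ => this b), Finset.sum_const, Finset.card_univ,
      Fintype.card_fun, hcardnp]
    simp [nsmul_eq_mul]
  rw [Finset.sum_congr rfl (fun a _ => hmid a), ← Finset.mul_sum,
    countBool (fun i : {i // p i} => x i.1) f, hcardp]

private lemma natid (w : ℕ) (hw : 1 ≤ w) :
    w * Nat.choose (w - 1) ((w + 1) / 2 - 1) = ((w + 1) / 2) * Nat.choose w ((w + 1) / 2) := by
  cases w with
  | zero => omega
  | succ w' =>
    have hm : 1 ≤ (w' + 2) / 2 := by omega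
    obtain ⟨m', hm'⟩ := Nat.exists_eq_add_of_le hm
    have h1 : (w' + 1 + 1) / 2 = m' + 1 := by omega
    simp only [Nat.add_sub_cancel, h1, Nat.add_sub_cancel]
    exact (Nat.add_one_mul_choose_eq w' m').trans (mul_comm _ _)

/-- `ν(w) = ⌈w/2⌉·C(w,⌈w/2⌉)`. -/
private def nuN (w : ℕ) : ℕ := ((w + 1) / 2) * Nat.choose w ((w + 1) / 2)

private lemma doubling (k : ℕ) : Nat.choose (2*k+2) (k+1) = 2 * Nat.choose (2*k+1) (k+1) := by
  have h1 : (2*k+1).choose k = (2*k+1).choose (k+1) := by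
    rw [show k + 1 = 2*k+1-k by omega]
    exact (Nat.choose_symm (by omega)).symm
  calc (2*k+2).choose (k+1) = (2*k+1).choose k + (2*k+1).choose (k+1) := by
        rw [show 2*k+2 = (2*k+1)+1 by ring, Nat.choose_succ_succ]
    _ = 2 * (2*k+1).choose (k+1) := by rw [h1]; ring

private lemma nu_even (k : ℕ) : nuN (2*k) = k * Nat.choose (2*k) k := by
  unfold nuN; rw [show (2*k+1)/2 = k by omega]

private lemma nu_odd (k : ℕ) : nuN (2*k+1) = (k+1) * Nat.choose (2*k+1) (k+1) := by
  unfold nuN; rw [show (2*k+1+1)/2 = k+1 by omega]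

private lemma nu_step (w : ℕ) : 2 * nuN w ≤ nuN (w + 1) := by
  rcases Nat.even_or_odd w with ⟨k, hk⟩ | ⟨k, hk⟩
  · subst hk
    rw [show k + k = 2*k by ring, nu_even, nu_odd]
    have h := Nat.add_one_mul_choose_eq (2*k) k
    calc 2 * (k * (2*k).choose k) = 2*k * (2*k).choose k := by ring
      _ ≤ (2*k+1) * (2*k).choose k := Nat.mul_le_mul_right _ (by omega)
      _ = (k+1) * (2*k+1).choose (k+1) := h.trans (Nat.mul_comm _ _)
  · subst hk
    rw [nu_odd, show 2*k+1+1 = 2*(k+1) by ring, nu_even,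
      show 2*(k+1) = 2*k+2 by ring, doubling]
    exact le_of_eq (by ring)

private lemma lam_eq_nu (n w : ℕ) (hw : 1 ≤ w) : lam n w = 2^(n-w) * (nuN w : ℝ) := by
  unfold lam nuN
  rw [mul_assoc]
  congr 1
  exact_mod_cast congrArg (Nat.cast (R := ℝ)) (natid w hw)

private lemma lam_step (n w : ℕ) (hw : 1 ≤ w) (hwn : w + 1 ≤ n) :
    lam n w ≤ lam n (w + 1) := by
  rw [lam_eq_nu n w hw, lam_eq_nu n (w+1) (by omega)]
  rw [show n - w = (n - (w+1)) + 1 by omega, pow_succ]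
  have h := nu_step w
  calc (2:ℝ)^(n-(w+1)) * 2 * (nuN w : ℝ) = (2:ℝ)^(n-(w+1)) * ((2 * nuN w : ℕ) : ℝ) := by
        push_cast; ring
    _ ≤ (2:ℝ)^(n-(w+1)) * ((nuN (w+1) : ℕ) : ℝ) := by
        apply mul_le_mul_of_nonneg_left _ (by positivity)
        exact_mod_cast Nat.cast_le.mpr h

theorem lambda_kernel_hamming (n : ℕ) (x y : Fin n → Bool) (w : ℕ)
    (hw1 : 1 ≤ w) (hwn : w ≤ n) (hxy : hammingDist x y = w) :
    ((1 : ℝ) / 2) * ∑ u : Fin n → Bool,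
        |(hammingDist x u : ℝ) - (hammingDist y u : ℝ)| = lam n w
    ∧ (∀ i : ℕ, 1 ≤ i → i ≤ n / 2 →
        lam n (2 * i - 1) = lam n (2 * i)
        ∧ lam n (2 * i) = (2 : ℝ) ^ (n - 2 * i) * i * Nat.choose (2 * i) i)
    ∧ (∀ v w' : ℕ, 1 ≤ v → v ≤ w' → w' ≤ n → lam n v ≤ lam n w') := by
  refine ⟨?_, ?_, ?_⟩
  · -- main formula
    set m := (w + 1) / 2 with hm
    have habs : ∀ u : Fin n → Bool,
        |(hammingDist x u : ℝ) - (hammingDist y u : ℝ)|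
          = (fun j : ℕ => |2 * (j:ℝ) - (w:ℝ)|)
              ((univ.filter (fun i => x i ≠ y i ∧ x i ≠ u i)).card) := by
      intro u
      have h := diff_eq n x y u
      rw [hxy] at h
      have h' : (hammingDist x u : ℝ) - (hammingDist y u : ℝ)
          = 2 * (((univ.filter (fun i => x i ≠ y i ∧ x i ≠ u i)).card : ℝ)) - w := by
        exact_mod_cast congrArg (fun z : ℤ => (z : ℝ)) h
      rw [h']
    rw [Finset.sum_congr rfl (fun u _ => habs u),
      factor n x y (fun j : ℕ => |2 * (j:ℝ) - (w:ℝ)|) w hxy]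
    have hcast : ∑ j ∈ range (w+1), (w.choose j : ℝ) * |2 * (j:ℝ) - (w:ℝ)|
        = ((2 * m * (w.choose m) : ℕ) : ℝ) := by
      have hs := sumid w
      rw [← hm] at hs
      have := congrArg (fun z : ℤ => (z : ℝ)) hs
      push_cast at this ⊢
      convert this using 2
    rw [hcast, lam_eq_nu n w hw1]
    unfold nuN
    rw [← hm]
    push_cast
    ring
  · -- even/odd values
    intro i hi1 hi2
    have h2i : 2 * i ≤ n := by omega
    obtain ⟨k, rfl⟩ : ∃ k, i = k + 1 := ⟨i - 1, by omega⟩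
    constructor
    · have e1 : 2 * (k+1) - 1 = 2*k+1 := by omega
      have e2 : nuN (2*k+2) = (k+1) * Nat.choose (2*k+2) (k+1) := by
        unfold nuN; rw [show (2*k+2+1)/2 = k+1 by omega]
      rw [e1, lam_eq_nu n (2*k+1) (by omega), show 2*(k+1) = 2*k+2 by ring,
        lam_eq_nu n (2*k+2) (by omega), nu_odd, e2, doubling,
        show n - (2*k+1) = (n - (2*k+2)) + 1 by omega, pow_succ]
      push_cast
      ring
    · have e2 : nuN (2*(k+1)) = (k+1) * Nat.choose (2*(k+1)) (k+1) := nu_even (k+1)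
      rw [lam_eq_nu n (2*(k+1)) (by omega), e2]
      push_cast
      ring
  · -- monotonicity
    refine fun v w' hv hvw => ?_
    induction w', hvw using Nat.le_induction with
    | base => exact fun _ => le_refl _
    | succ m hm ih =>
      exact fun h => le_trans (ih (by omega)) (lam_step n m (by omega) h)
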